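/- Let p > 2, 1 < α < 2, and ν > 0. Then there exists δ ∈ (0, 1) such that for all x ∈ (0, δ), (1 + x^p + pν x^α)^{2/p} > 1 + x². Consequently, for such x, f(x, 1) < 1 = f(0, 1), where f(x,y) = (x²+y²)/(x^p+y^p+pνx^αy^β)^{2/p} with β = p − α; hence no point of the form (0, y) or (x, 0) minimizes f over {x, y ≥ 0, (x,y) ≠ (0,0)}. -/

import Mathlib

/-!
Near `x = 0` the numerator `1 + x²` of `f(x, 1)`, raised to the power `p/2`, grows only like
`1 + K x²` (convexity of `t ↦ t^(p/2)` on `[1, 2]`), while the denominator before taking the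
`2/p`-th root is at least `1 + pν x^α`, and `x^α ≫ x²` because `α < 2`. So `f(x, 1) < 1` for small
`x > 0`, whereas `f` equals `1` on both coordinate axes.
-/

open Real Filter Topology

noncomputable section

/-- The function `f(x,y) = (x²+y²)/(x^p + y^p + pν x^α y^(p-α))^(2/p)`. -/
def fmin (p ν α x y : ℝ) : ℝ :=
  (x^2 + y^2) / ((x ^ p + y ^ p + p*ν * x ^ α * y ^ (p - α)) ^ (2/p))

/-- The chord of the convex function `t ↦ t^s` between `1` and `2`. -/
lemma one_add_rpow_le {s t : ℝ} (hs : 1 ≤ s) (ht₀ : 0 ≤ t) (ht₁ : t ≤ 1) :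
    (1 + t) ^ s ≤ 1 + (2 ^ s - 1) * t := by
  have h := (convexOn_rpow hs).2 (Set.mem_Ici.2 zero_le_one)
    (Set.mem_Ici.2 zero_le_two) (sub_nonneg.2 ht₁) ht₀ (sub_add_cancel 1 t)
  simp only [smul_eq_mul, one_rpow, mul_one] at h
  rw [show 1 - t + t * 2 = 1 + t by ring] at h
  linarith

lemma eventually_mul_sq_lt_mul_rpow {a c : ℝ} (ha : a < 2) (hc : 0 < c) (K : ℝ) :
    ∀ᶠ x in 𝓝[>] 0, K * x ^ 2 < c * x ^ a := by
  have hlim : Tendsto (fun x : ℝ => K * x ^ (2 - a)) (𝓝[>] 0) (𝓝 0) := by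
    have h := ((continuousAt_rpow_const 0 (2 - a) (Or.inr (sub_pos.2 ha).le)).const_mul K)
    rw [ContinuousAt, zero_rpow (sub_pos.2 ha).ne', mul_zero] at h
    exact h.mono_left nhdsWithin_le_nhds
  filter_upwards [hlim.eventually (gt_mem_nhds hc), self_mem_nhdsWithin] with x hx hx₀
  have hsplit : x ^ 2 = x ^ (2 - a) * x ^ a := by
    rw [← rpow_add hx₀, sub_add_cancel, rpow_two]
  rw [hsplit, ← mul_assoc]
  exact mul_lt_mul_of_pos_right hx (rpow_pos_of_pos hx₀ a)

lemma eventually_one_add_sq_lt {p a c : ℝ} (hp : 2 < p) (ha : a < 2) (hc : 0 < c) :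
    ∀ᶠ x in 𝓝[>] 0, 1 + x ^ 2 < (1 + x ^ p + c * x ^ a) ^ (2 / p) := by
  have hlt_one : ∀ᶠ x in 𝓝[>] (0 : ℝ), x < 1 :=
    nhdsWithin_le_nhds (gt_mem_nhds zero_lt_one)
  filter_upwards [eventually_mul_sq_lt_mul_rpow ha hc (2 ^ (p / 2) - 1), hlt_one,
    self_mem_nhdsWithin] with x hK hx₁ (hx₀ : 0 < x)
  have hchord : (1 + x ^ 2) ^ (p / 2) ≤ 1 + (2 ^ (p / 2) - 1) * x ^ 2 :=
    one_add_rpow_le (by linarith) (by positivity) (by nlinarith)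
  have hxp : 0 ≤ x ^ p := rpow_nonneg hx₀.le p
  rw [← inv_div, lt_rpow_inv_iff_of_pos (by positivity) (by positivity) (by positivity)]
  linarith

lemma fmin_right_one (p ν α x : ℝ) :
    fmin p ν α x 1 = (1 + x ^ 2) / (1 + x ^ p + p * ν * x ^ α) ^ (2 / p) := by
  rw [fmin, one_rpow, one_rpow, one_pow, mul_one, add_comm (x ^ 2), add_comm (x ^ p)]

lemma rpow_rpow_two_div {p : ℝ} (hp : p ≠ 0) {y : ℝ} (hy : 0 ≤ y) :
    (y ^ p) ^ (2 / p) = y ^ 2 := by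
  rw [← rpow_mul hy, mul_div_cancel₀ 2 hp, rpow_two]

lemma fmin_zero_left {p α : ℝ} (hp : p ≠ 0) (hα : α ≠ 0) (ν : ℝ) {y : ℝ} (hy : 0 < y) :
    fmin p ν α 0 y = 1 := by
  rw [fmin, zero_rpow hp, zero_rpow hα, mul_zero, zero_mul, zero_add, add_zero,
    rpow_rpow_two_div hp hy.le, zero_pow two_ne_zero, zero_add, div_self (by positivity)]

lemma fmin_zero_right {p α : ℝ} (hp : p ≠ 0) (hpα : p - α ≠ 0) (ν : ℝ) {x : ℝ} (hx : 0 < x) :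
    fmin p ν α x 0 = 1 := by
  rw [fmin, zero_rpow hp, zero_rpow hpα, mul_zero, add_zero, add_zero,
    rpow_rpow_two_div hp hx.le, zero_pow two_ne_zero, add_zero, div_self (by positivity)]

lemma fmin_eq_one_of_mem_axes {p α : ℝ} (hp : p ≠ 0) (hα : α ≠ 0) (hpα : p - α ≠ 0) (ν : ℝ)
    {x y : ℝ} (hx : 0 ≤ x) (hy : 0 ≤ y) (hxy : (x, y) ≠ (0, 0)) (haxes : x = 0 ∨ y = 0) :
    fmin p ν α x y = 1 := by
  rcases haxes with rfl | rfl
  · exact fmin_zero_left hp hα ν (hy.lt_of_ne' fun h => hxy (by rw [h]))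
  · exact fmin_zero_right hp hpα ν (hx.lt_of_ne' fun h => hxy (by rw [h]))

theorem stmt (p ν α : ℝ) (hp : 2 < p) (hα₁ : 1 < α) (hα₂ : α < 2) (hν : 0 < ν) :
    (∃ δ : ℝ, 0 < δ ∧ δ < 1 ∧
      ∀ x : ℝ, 0 < x → x < δ →
        1 + x^2 < (1 + x ^ p + p*ν * x ^ α) ^ (2/p) ∧ fmin p ν α x 1 < 1) ∧
    fmin p ν α 0 1 = 1 ∧
    (∀ x y : ℝ, 0 ≤ x → 0 ≤ y → (x, y) ≠ (0, 0) → (x = 0 ∨ y = 0) →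
      ¬ (∀ x' y' : ℝ, 0 ≤ x' → 0 ≤ y' → (x', y') ≠ (0, 0) →
        fmin p ν α x y ≤ fmin p ν α x' y')) := by
  have hp₀ : p ≠ 0 := by positivity
  have hα₀ : α ≠ 0 := by positivity
  have hpα : p - α ≠ 0 := by linarith
  have hnum_lt : ∀ᶠ x in 𝓝[>] 0, 1 + x ^ 2 < (1 + x ^ p + p * ν * x ^ α) ^ (2 / p) :=
    eventually_one_add_sq_lt hp hα₂ (by positivity)
  obtain ⟨δ, hδ₀, hδ⟩ := (nhdsGT_basis (0 : ℝ)).eventually_iff.1 hnum_lt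
  have hsmall : ∀ x : ℝ, 0 < x → x < min δ (1 / 2) →
      1 + x ^ 2 < (1 + x ^ p + p * ν * x ^ α) ^ (2 / p) ∧ fmin p ν α x 1 < 1 := by
    intro x hx hxδ
    have h := hδ ⟨hx, hxδ.trans_le (min_le_left _ _)⟩
    refine ⟨h, ?_⟩
    rw [fmin_right_one, div_lt_one ((by positivity : (0 : ℝ) < 1 + x ^ 2).trans h)]
    exact h
  have hδ' : 0 < min δ (1 / 2) := lt_min hδ₀ one_half_pos
  refine ⟨⟨min δ (1 / 2), hδ', by linarith [min_le_right δ (1 / 2)], hsmall⟩,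
    fmin_zero_left hp₀ hα₀ ν one_pos, ?_⟩
  intro x y hx hy hxy haxes hmin
  have hle := hmin _ 1 (half_pos hδ').le zero_le_one (by simp)
  rw [fmin_eq_one_of_mem_axes hp₀ hα₀ hpα ν hx hy hxy haxes] at hle
  exact (hsmall _ (half_pos hδ') (half_lt_self hδ')).2.not_ge hle
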